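/- Let g : ℝ → ℝ be continuously differentiable with g'(x) > 0 for all x, lim_{x→−∞} g(x) = 0, lim_{x→+∞} g(x) = 1, g(x) + g(−x) = 1 for all real x, and lim_{x→+∞} g'(x) = 0; let g⁻¹ : (0,1) → ℝ be the inverse of g. Then for every M > 0 there exists p₀ ∈ (0,1) such that for every p ∈ (p₀, 1) there exists q ∈ (0,1) for which the derivative of the map r ↦ g( g⁻¹(r) + g⁻¹(q) ) at r = p is strictly greater than M. -/

import Mathlib

open Filter Set

/-! Take `q = g (-x)` where `x = g⁻¹ p`. Then `r ↦ g (g⁻¹ r + g⁻¹ q)` has derivative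
`g' 0 / g' x` at `p`, and `p → 1` forces `x → ∞`, hence `g' x → 0`. -/

theorem StrictMono.mem_Ioo_of_tendsto {g : ℝ → ℝ} {a b : ℝ} (hg : StrictMono g)
    (hbot : Tendsto g atBot (nhds a)) (htop : Tendsto g atTop (nhds b)) (x : ℝ) :
    g x ∈ Ioo a b :=
  ⟨(hg.monotone.le_of_tendsto hbot (x - 1)).trans_lt (hg (sub_one_lt x)),
    (hg (lt_add_one x)).trans_le (hg.monotone.ge_of_tendsto htop (x + 1))⟩

section LocalInverse

variable {f g : ℝ → ℝ} {s : Set ℝ} {p : ℝ}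

theorem continuousAt_of_leftInverse_of_strictMono (hf : StrictMono f) (hfc : Continuous f)
    (hleft : ∀ x, g (f x) = x) (hright : ∀ y ∈ s, f (g y) = y) (hs : IsOpen s) (hp : p ∈ s) :
    ContinuousAt g p := by
  have hg : StrictMonoOn g s := fun a ha b hb hab =>
    hf.lt_iff_lt.mp (by rwa [hright a ha, hright b hb])
  have hpre : f ⁻¹' s ⊆ g '' s := fun y hy => ⟨f y, hy, hleft y⟩
  refine hg.continuousAt_of_image_mem_nhds (hs.mem_nhds hp) (mem_of_superset ?_ hpre)
  exact (hs.preimage hfc).mem_nhds (by simpa only [mem_preimage, hright p hp] using hp)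

theorem hasDerivAt_of_leftInverse_of_strictMono {f' : ℝ} (hf : StrictMono f)
    (hfc : Continuous f) (hleft : ∀ x, g (f x) = x) (hright : ∀ y ∈ s, f (g y) = y)
    (hs : IsOpen s) (hp : p ∈ s) (hf' : HasDerivAt f f' (g p)) (hf'0 : f' ≠ 0) :
    HasDerivAt g f'⁻¹ p :=
  hf'.of_local_left_inverse
    (continuousAt_of_leftInverse_of_strictMono hf hfc hleft hright hs hp) hf'0
    (eventually_of_mem (hs.mem_nhds hp) hright)

theorem hasDerivAt_comp_add_leftInverse (hf : Differentiable ℝ f) (hpos : ∀ x, 0 < deriv f x)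
    (hleft : ∀ x, g (f x) = x) (hright : ∀ y ∈ s, f (g y) = y) (hs : IsOpen s) (hp : p ∈ s)
    (c : ℝ) :
    HasDerivAt (fun r => f (g r + c)) (deriv f (g p + c) / deriv f (g p)) p := by
  have hg : HasDerivAt g (deriv f (g p))⁻¹ p :=
    hasDerivAt_of_leftInverse_of_strictMono (strictMono_of_deriv_pos hpos) hf.continuous
      hleft hright hs hp (hf _).hasDerivAt (hpos _).ne'
  rw [div_eq_mul_inv]
  exact (hf _).hasDerivAt.comp p (hg.add_const c)

end LocalInverse

theorem stmt_4 (g ginv : ℝ → ℝ)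
    (hpos : ∀ x : ℝ, 0 < deriv g x)
    (hbot : Tendsto g atBot (nhds 0)) (htop : Tendsto g atTop (nhds 1))
    (hderiv0 : Tendsto (deriv g) atTop (nhds 0))
    (hleft : ∀ x : ℝ, ginv (g x) = x)
    (hright : ∀ y ∈ Ioo (0 : ℝ) 1, g (ginv y) = y) :
    ∀ M > (0 : ℝ), ∃ p₀ ∈ Ioo (0 : ℝ) 1, ∀ p ∈ Ioo p₀ 1, ∃ q ∈ Ioo (0 : ℝ) 1,
      deriv (fun r : ℝ => g (ginv r + ginv q)) p > M := by
  intro M hM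
  have hdiff : Differentiable ℝ g := fun x => differentiableAt_of_deriv_ne_zero (hpos x).ne'
  have hmono : StrictMono g := strictMono_of_deriv_pos hpos
  have hmem := hmono.mem_Ioo_of_tendsto hbot htop
  obtain ⟨x₀, hx₀⟩ :=
    (hderiv0.eventually_lt_const (div_pos (hpos 0) hM)).exists_forall_of_atTop
  refine ⟨g x₀, hmem x₀, fun p hp => ?_⟩
  have hp01 : p ∈ Ioo (0 : ℝ) 1 := ⟨(hmem x₀).1.trans hp.1, hp.2⟩
  have hx₀p : x₀ < ginv p := hmono.lt_iff_lt.mp (by rw [hright p hp01]; exact hp.1)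
  refine ⟨g (-ginv p), hmem _, ?_⟩
  rw [(hasDerivAt_comp_add_leftInverse hdiff hpos hleft hright isOpen_Ioo hp01 _).deriv,
    hleft, add_neg_cancel, gt_iff_lt, lt_div_iff₀ (hpos _), ← lt_div_iff₀' hM]
  exact hx₀ _ hx₀p.le
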